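/- For call-by-name xCL extended with binary erratic choice ⊕ (a nondeterministic system): for every closed term t and every value v, t ⇓ v if and only if t →* v. -/
import Mathlib


/-- Closed terms of xCL extended with binary erratic choice `⊕`. -/
inductive Tm : Type
  | S : Tm
  | K : Tm
  | I : Tm
  | S1 : Tm → Tm
  | K1 : Tm → Tm
  | S2 : Tm → Tm → Tm
  | app : Tm → Tm → Tm
  | oplus : Tm → Tm → Tm

/-- Values: topmost constructor among `S, K, I, S', K', S''`. -/
def Tm.IsValue : Tm → Prop
  | .app _ _ => False
  | .oplus _ _ => False
  | _ => True

/-- Labeled value transitions `t ─s→ t'`. -/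
inductive LStep : Tm → Tm → Tm → Prop
  | S (t : Tm) : LStep .S t (.S1 t)
  | S1 (t s : Tm) : LStep (.S1 t) s (.S2 t s)
  | S2 (t s r : Tm) : LStep (.S2 t s) r (.app (.app t r) (.app s r))
  | K (t : Tm) : LStep .K t (.K1 t)
  | K1 (t s : Tm) : LStep (.K1 t) s t
  | I (t : Tm) : LStep .I t t

/-- Unlabeled small-step transitions `t → t'` (nondeterministic). -/
inductive Step : Tm → Tm → Prop
  | appL {t t' : Tm} (s : Tm) : Step t t' → Step (.app t s) (.app t' s)
  | beta {t t' s : Tm} : LStep t s t' → Step (.app t s) t'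
  | choiceL (t s : Tm) : Step (.oplus t s) t
  | choiceR (t s : Tm) : Step (.oplus t s) s

/-- Big-step semantics `t ⇓ v`. -/
inductive Big : Tm → Tm → Prop
  | val {v : Tm} : v.IsValue → Big v v
  | appI {s t v : Tm} : Big s .I → Big t v → Big (.app s t) v
  | appK {s t : Tm} : Big s .K → Big (.app s t) (.K1 t)
  | appS {s t : Tm} : Big s .S → Big (.app s t) (.S1 t)
  | appK1 {s t r v : Tm} : Big s (.K1 r) → Big r v → Big (.app s t) v
  | appS1 {s t r : Tm} : Big s (.S1 r) → Big (.app s t) (.S2 r t)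
  | appS2 {s t r q v : Tm} :
      Big s (.S2 r q) → Big (.app (.app r t) (.app q t)) v → Big (.app s t) v
  | choiceL {t s v : Tm} : Big t v → Big (.oplus t s) v
  | choiceR {t s v : Tm} : Big s v → Big (.oplus t s) v


lemma stepsAppL {t t' : Tm} (s : Tm) (h : Relation.ReflTransGen Step t t') :
    Relation.ReflTransGen Step (.app t s) (.app t' s) := by
  induction h with
  | refl => exact .refl
  | tail _ h2 ih => exact ih.tail (.appL s h2)

lemma big_to_small {t v : Tm} (h : Big t v) : Relation.ReflTransGen Step t v := by
  induction h with
  | val _ => exact .refl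
  | appI _ _ ih1 ih2 =>
      exact ((stepsAppL _ ih1).tail (.beta (.I _))).trans ih2
  | appK _ ih => exact (stepsAppL _ ih).tail (.beta (.K _))
  | appS _ ih => exact (stepsAppL _ ih).tail (.beta (.S _))
  | appK1 _ _ ih1 ih2 =>
      exact ((stepsAppL _ ih1).tail (.beta (.K1 _ _))).trans ih2
  | appS1 _ ih => exact (stepsAppL _ ih).tail (.beta (.S1 _ _))
  | appS2 _ _ ih1 ih2 =>
      exact ((stepsAppL _ ih1).tail (.beta (.S2 _ _ _))).trans ih2
  | choiceL _ ih => exact (Relation.ReflTransGen.single (.choiceL _ _)).trans ih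
  | choiceR _ ih => exact (Relation.ReflTransGen.single (.choiceR _ _)).trans ih

lemma expand {t t' v : Tm} (h : Step t t') (hb : Big t' v) : Big t v := by
  induction h generalizing v with
  | appL s _ ih =>
      cases hb with
      | val h => exact absurd h (by simp [Tm.IsValue])
      | appI h1 h2 => exact .appI (ih h1) h2
      | appK h1 => exact .appK (ih h1)
      | appS h1 => exact .appS (ih h1)
      | appK1 h1 h2 => exact .appK1 (ih h1) h2
      | appS1 h1 => exact .appS1 (ih h1)
      | appS2 h1 h2 => exact .appS2 (ih h1) h2
  | beta hl =>
      cases hl with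
      | S t =>
          cases hb with
          | val _ => exact .appS (.val trivial)
      | S1 t s =>
          cases hb with
          | val _ => exact .appS1 (.val trivial)
      | S2 t s r => exact .appS2 (.val trivial) hb
      | K t =>
          cases hb with
          | val _ => exact .appK (.val trivial)
      | K1 t s => exact .appK1 (.val trivial) hb
      | I t => exact .appI (.val trivial) hb
  | choiceL t s => exact .choiceL hb
  | choiceR t s => exact .choiceR hb

/-- Big-step/small-step equivalence for call-by-name xCL with erratic choice. -/
theorem xCL_choice_big_iff_small (t v : Tm) (hv : v.IsValue) :
    Big t v ↔ Relation.ReflTransGen Step t v := by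
  constructor
  · exact big_to_small
  · intro h
    induction h using Relation.ReflTransGen.head_induction_on with
    | refl => exact .val hv
    | head h1 _ ih => exact expand h1 ih
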